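/- Let A be a q×n complex matrix, W a nonzero n×q complex matrix, B a q×p complex matrix, m a positive integer, and k = max(Ind(AW), Ind(WA)). Then over all n×p matrices X with range(X) ⊆ range((WA)^k), the Frobenius norm ‖(WA)^{m+1}·X − (WA)^m·W·A·A^†·B‖_F is uniquely minimized at X = A^{Ⓦ_m,W,†}·B. -/

import Mathlib

open Matrix

/-- Index of a square matrix: least `d` with `rank (B^d) = rank (B^(d+1))`. -/
noncomputable def matInd {ι : Type*} [Fintype ι] [DecidableEq ι] (B : Matrix ι ι ℂ) : ℕ :=
  sInf {d : ℕ | (B ^ d).rank = (B ^ (d + 1)).rank}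

/-- `X` is the Moore-Penrose inverse of `A` (four Penrose equations). -/
noncomputable def IsMP {ι κ : Type*} [Fintype ι] [Fintype κ] (A : Matrix ι κ ℂ) (X : Matrix κ ι ℂ) : Prop :=
  A * X * A = A ∧ X * A * X = X ∧ (A * X)ᴴ = A * X ∧ (X * A)ᴴ = X * A

/-- Column space (range) of a matrix. -/
noncomputable def mrange {ι κ : Type*} [Fintype κ] (M : Matrix ι κ ℂ) : Submodule ℂ (ι → ℂ) :=
  LinearMap.range M.mulVecLin

/-- Null space of a matrix. -/
noncomputable def mker {ι κ : Type*} [Fintype κ] (M : Matrix ι κ ℂ) : Submodule ℂ (κ → ℂ) :=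
  LinearMap.ker M.mulVecLin

/-- `X` is the core-EP inverse of `B`. -/
noncomputable def IsCoreEP {ι : Type*} [Fintype ι] [DecidableEq ι] (B X : Matrix ι ι ℂ) : Prop :=
  X * B * X = X ∧ mrange X = mrange (B ^ matInd B) ∧ mrange Xᴴ = mrange (B ^ matInd B)

/-- `X` is the Drazin inverse of `B`. -/
noncomputable def IsDrazin {ι : Type*} [Fintype ι] [DecidableEq ι] (B X : Matrix ι ι ℂ) : Prop :=
  X * B * X = X ∧ B * X = X * B ∧ B ^ (matInd B + 1) * X = B ^ matInd B

/-- `X` is the group inverse of `B`. -/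
noncomputable def IsGroupInv {ι : Type*} [Fintype ι] (B X : Matrix ι ι ℂ) : Prop :=
  B * X * B = B ∧ X * B * X = X ∧ B * X = X * B

/-- Frobenius norm of a matrix. -/
noncomputable def frobNorm {ι κ : Type*} [Fintype ι] [Fintype κ] (M : Matrix ι κ ℂ) : ℝ :=
  Real.sqrt (∑ i, ∑ j, ‖M i j‖ ^ 2)

section Aux

lemma mrange_mul_le {ι κ₁ κ₂ : Type*} [Fintype κ₁] [Fintype κ₂]
    (M : Matrix ι κ₁ ℂ) (N : Matrix κ₁ κ₂ ℂ) : mrange (M * N) ≤ mrange M := by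
  rw [mrange, mrange, Matrix.mulVecLin_mul]
  exact LinearMap.range_comp_le_range _ _

lemma mrange_mul {ι κ₁ κ₂ : Type*} [Fintype κ₁] [Fintype κ₂]
    (M : Matrix ι κ₁ ℂ) (N : Matrix κ₁ κ₂ ℂ) :
    mrange (M * N) = (mrange N).map M.mulVecLin := by
  rw [mrange, mrange, Matrix.mulVecLin_mul, LinearMap.range_comp]

lemma mfactor {ι κ₁ κ₂ : Type*} [Fintype ι] [Fintype κ₁] [Fintype κ₂] [DecidableEq κ₂]
    (M : Matrix ι κ₂ ℂ) (N : Matrix ι κ₁ ℂ) (h : mrange M ≤ mrange N) :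
    ∃ Z : Matrix κ₁ κ₂ ℂ, M = N * Z := by
  have hcol : ∀ j, ∃ z, N *ᵥ z = Mᵀ j := by
    intro j
    have hm : Mᵀ j ∈ mrange M := ⟨Pi.single j 1, by
      rw [Matrix.mulVecLin_apply, Matrix.mulVec_single_one]; rfl⟩
    obtain ⟨z, hz⟩ := h hm
    exact ⟨z, by rw [← Matrix.mulVecLin_apply]; exact hz⟩
  choose z hz using hcol
  refine ⟨Matrix.of fun i j => z j i, ?_⟩
  ext i j
  have := congrFun (hz j) i
  simp only [Matrix.transpose_apply] at this
  rw [← this]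
  simp [Matrix.mulVec, Matrix.mul_apply, dotProduct]

variable {n : ℕ}

lemma hrank_eq (M : Matrix (Fin n) (Fin n) ℂ) : M.rank = Module.finrank ℂ (mrange M) := rfl

lemma mrange_pow_succ_le (C : Matrix (Fin n) (Fin n) ℂ) (j : ℕ) :
    mrange (C ^ (j + 1)) ≤ mrange (C ^ j) := by
  rw [pow_succ]; exact mrange_mul_le _ _

lemma matInd_spec (C : Matrix (Fin n) (Fin n) ℂ) :
    (C ^ matInd C).rank = (C ^ (matInd C + 1)).rank := by
  have hne : {d : ℕ | (C ^ d).rank = (C ^ (d + 1)).rank}.Nonempty := by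
    by_contra hcon
    rw [Set.not_nonempty_iff_eq_empty] at hcon
    have hcon' : ∀ j : ℕ, (C ^ j).rank ≠ (C ^ (j + 1)).rank := by
      intro j hj
      have : j ∈ {d : ℕ | (C ^ d).rank = (C ^ (d + 1)).rank} := hj
      rw [hcon] at this
      exact this
    have hlt : ∀ j, (C ^ (j + 1)).rank < (C ^ j).rank := by
      intro j
      refine lt_of_le_of_ne ?_ fun he => hcon' j he.symm
      rw [hrank_eq, hrank_eq]
      exact Submodule.finrank_mono (mrange_pow_succ_le C j)
    have hsum : ∀ j, (C ^ j).rank + j ≤ (C ^ 0).rank := by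
      intro j
      induction j with
      | zero => simp
      | succ t ih => have := hlt t; omega
    have := hsum ((C ^ 0).rank + 1)
    omega
  exact Nat.sInf_mem hne

lemma mrange_pow_add (C : Matrix (Fin n) (Fin n) ℂ) (t : ℕ) :
    mrange (C ^ (matInd C + t)) = mrange (C ^ matInd C) := by
  have base : mrange (C ^ (matInd C + 1)) = mrange (C ^ matInd C) := by
    refine Submodule.eq_of_le_of_finrank_le (mrange_pow_succ_le C _) ?_
    rw [← hrank_eq, ← hrank_eq]
    exact le_of_eq (matInd_spec C)
  induction t with
  | zero => rw [Nat.add_zero]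
  | succ s ih =>
    rw [show matInd C + (s + 1) = (matInd C + s) + 1 from rfl, pow_succ', mrange_mul, ih,
        ← mrange_mul, ← pow_succ']
    exact base

lemma pow_inj_on_range (C : Matrix (Fin n) (Fin n) ℂ) (k r : ℕ) (hk : matInd C ≤ k)
    (w : Fin n → ℂ) (hw : w ∈ mrange (C ^ k)) (h0 : (C ^ r) *ᵥ w = 0) : w = 0 := by
  have hstab : ∀ j, k ≤ j → mrange (C ^ j) = mrange (C ^ k) := by
    intro j hj
    obtain ⟨t, rfl⟩ := Nat.exists_eq_add_of_le hk
    obtain ⟨s, rfl⟩ := Nat.exists_eq_add_of_le hj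
    rw [Nat.add_assoc, mrange_pow_add, mrange_pow_add]
  have hmaps : ∀ x ∈ mrange (C ^ k), (C ^ r).mulVecLin x ∈ mrange (C ^ k) := by
    intro x hx
    obtain ⟨z, hz⟩ := hx
    have hxe : (C ^ r).mulVecLin x = (C ^ (r + k)).mulVecLin z := by
      rw [← hz]
      simp [Matrix.mulVecLin_apply, pow_add, Matrix.mulVec_mulVec]
    rw [hxe, ← hstab (r + k) (Nat.le_add_left _ _)]
    exact ⟨z, rfl⟩
  let T := ((C ^ r).mulVecLin).restrict hmaps
  have hsurj : Function.Surjective T := by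
    rintro ⟨y, hy⟩
    have hy' : y ∈ mrange (C ^ (r + k)) := by
      rw [hstab (r + k) (Nat.le_add_left _ _)]; exact hy
    obtain ⟨z, hz⟩ := hy'
    refine ⟨⟨(C ^ k).mulVecLin z, ⟨z, rfl⟩⟩, ?_⟩
    apply Subtype.ext
    show (C ^ r).mulVecLin ((C ^ k).mulVecLin z) = y
    rw [← hz]
    simp [Matrix.mulVecLin_apply, pow_add, Matrix.mulVec_mulVec]
  have hinj : Function.Injective T := LinearMap.injective_iff_surjective.mpr hsurj
  have hz : (⟨w, hw⟩ : mrange (C ^ k)) = 0 := by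
    apply hinj
    apply Subtype.ext
    show (C ^ r).mulVecLin w = (C ^ r).mulVecLin ((0 : mrange (C ^ k)) : Fin n → ℂ)
    simp only [Matrix.mulVecLin_apply, h0, Submodule.coe_zero, Matrix.mulVec_zero]
  exact congrArg Subtype.val hz

lemma frob_sq_add {a b : Type*} [Fintype a] [Fintype b] (U V : Matrix a b ℂ)
    (h : Uᴴ * V = 0) :
    ∑ i, ∑ j, ‖(U + V) i j‖ ^ 2 = (∑ i, ∑ j, ‖U i j‖ ^ 2) + ∑ i, ∑ j, ‖V i j‖ ^ 2 := by
  have hVU : Vᴴ * U = 0 := by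
    have := congrArg Matrix.conjTranspose h
    simpa [Matrix.conjTranspose_mul] using this
  have htr : (∑ i, ∑ j, U i j * (starRingEnd ℂ) (V i j)) = 0 := by
    have h0 : Matrix.trace (U * Vᴴ) = 0 := by
      rw [Matrix.trace_mul_comm, hVU, Matrix.trace_zero]
    rw [← h0, Matrix.trace]
    simp [Matrix.diag, Matrix.mul_apply, Matrix.conjTranspose_apply]
  have hre : (∑ i, ∑ j, (U i j * (starRingEnd ℂ) (V i j)).re) = 0 := by
    have : (∑ i, ∑ j, U i j * (starRingEnd ℂ) (V i j)).re = 0 := by rw [htr]; rfl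
    simpa [Complex.re_sum] using this
  have key : ∀ z w : ℂ, ‖z + w‖ ^ 2 = ‖z‖ ^ 2 + ‖w‖ ^ 2 + 2 * (z * (starRingEnd ℂ) w).re := by
    intro z w
    rw [Complex.sq_norm, Complex.sq_norm, Complex.sq_norm, Complex.normSq_add]
  calc ∑ i, ∑ j, ‖(U + V) i j‖ ^ 2
      = ∑ i, ∑ j, (‖U i j‖ ^ 2 + ‖V i j‖ ^ 2 + 2 * (U i j * (starRingEnd ℂ) (V i j)).re) := by
        refine Finset.sum_congr rfl fun i _ => Finset.sum_congr rfl fun j _ => ?_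
        rw [Matrix.add_apply, key]
    _ = (∑ i, ∑ j, ‖U i j‖ ^ 2) + ∑ i, ∑ j, ‖V i j‖ ^ 2 := by
        simp only [Finset.sum_add_distrib, ← Finset.mul_sum, hre, mul_zero, add_zero]

lemma proj_fix {ι κ : Type*} [Fintype ι] [Fintype κ] [DecidableEq κ]
    (P : Matrix ι ι ℂ) (hPP : P * P = P) (M : Matrix ι κ ℂ)
    (h : mrange M ≤ mrange P) : P * M = M := by
  obtain ⟨Z, rfl⟩ := mfactor M P h
  rw [← Matrix.mul_assoc, hPP]

end Aux

theorem stmt14 {q n p : ℕ} (A : Matrix (Fin q) (Fin n) ℂ) (W : Matrix (Fin n) (Fin q) ℂ)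
    (hW : W ≠ 0) (B : Matrix (Fin q) (Fin p) ℂ) (m : ℕ) (hm : 0 < m) (k : ℕ)
    (hk : k = max (matInd (A * W)) (matInd (W * A)))
    (Adag : Matrix (Fin n) (Fin q) ℂ) (hAdag : IsMP A Adag)
    (WAcep : Matrix (Fin n) (Fin n) ℂ) (hWAcep : IsCoreEP (W * A) WAcep)
    (AepW AWGm : Matrix (Fin q) (Fin n) ℂ) (AWGMP : Matrix (Fin n) (Fin q) ℂ)
    (hAepW : AepW = A * (WAcep * WAcep))
    (hAWGm : AWGm = (AepW * W) ^ m * AepW * (W * A) ^ m)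
    (hAWGMP : AWGMP = W * AWGm * W * A * Adag) :
    mrange (AWGMP * B) ≤ mrange ((W * A) ^ k) ∧
      ∀ X : Matrix (Fin n) (Fin p) ℂ, mrange X ≤ mrange ((W * A) ^ k) → X ≠ AWGMP * B →
        frobNorm ((W * A) ^ (m + 1) * (AWGMP * B) - (W * A) ^ m * W * A * Adag * B) <
          frobNorm ((W * A) ^ (m + 1) * X - (W * A) ^ m * W * A * Adag * B) := by
  set C := W * A with hC
  obtain ⟨hX, hr1, hr2⟩ := hWAcep
  set X₀ := WAcep with hX₀
  set d := matInd C with hd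
  have hkd : d ≤ k := by rw [hk]; exact le_max_right _ _
  set P := C * X₀ with hP
  -- basic algebra
  have hX' : X₀ * (C * X₀) = X₀ := by rw [← Matrix.mul_assoc]; exact hX
  have hX2 : ∀ T : Matrix (Fin n) (Fin n) ℂ, X₀ * (C * (X₀ * T)) = X₀ * T := by
    intro T
    rw [← Matrix.mul_assoc X₀ C, ← Matrix.mul_assoc, hX]
  have hPP : P * P = P := by
    rw [hP, Matrix.mul_assoc, hX']
  have hXP : X₀ * P = X₀ := hX'
  -- range facts
  have hrP : mrange P = mrange (C ^ d) := by
    rw [hP, mrange_mul, hr1, ← mrange_mul, ← pow_succ']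
    exact mrange_pow_add C 1
  have hstab : ∀ j, d ≤ j → mrange (C ^ j) = mrange (C ^ d) := by
    intro j hj
    obtain ⟨t, rfl⟩ := Nat.exists_eq_add_of_le hj
    exact mrange_pow_add C t
  have hPX : P * X₀ = X₀ := by
    refine proj_fix P hPP X₀ (le_of_eq ?_)
    rw [hr1, ← hrP]
  have hPpow : ∀ j, d ≤ j → P * C ^ j = C ^ j := by
    intro j hj
    refine proj_fix P hPP _ (le_of_eq ?_)
    rw [hstab j hj, ← hrP]
  -- P is Hermitian
  have hPH : Pᴴ = P := by
    have hle : mrange P ≤ mrange X₀ᴴ := by rw [hr2, hrP]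
    obtain ⟨U, hU⟩ := mfactor P X₀ᴴ hle
    have h1 : X₀ * (1 - P) = 0 := by
      rw [Matrix.mul_sub, Matrix.mul_one, hXP, sub_self]
    have h2 : Pᴴ * (1 - P) = 0 := by
      rw [hU, Matrix.conjTranspose_mul, Matrix.conjTranspose_conjTranspose,
        Matrix.mul_assoc, ← hU, h1, Matrix.mul_zero]
    have h3 : Pᴴ * P = Pᴴ := by
      rw [Matrix.mul_sub, Matrix.mul_one] at h2
      exact (sub_eq_zero.mp h2).symm
    have h4 : (Pᴴ * P)ᴴ = Pᴴ * P := by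
      rw [Matrix.conjTranspose_mul, Matrix.conjTranspose_conjTranspose]
    calc Pᴴ = Pᴴ * P := h3.symm
      _ = (Pᴴ * P)ᴴ := h4.symm
      _ = (Pᴴ)ᴴ := by rw [h3]
      _ = P := Matrix.conjTranspose_conjTranspose P
  -- power identities
  have hCX : ∀ j, C ^ (j + 1) * X₀ ^ (j + 1) = P := by
    intro j
    induction j with
    | zero => rw [pow_one, pow_one]
    | succ s ih =>
      rw [pow_succ' C (s + 1), pow_succ X₀ (s + 1), Matrix.mul_assoc,
        ← Matrix.mul_assoc (C ^ (s + 1)), ih, hPX]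
  have hCXX : ∀ j, (C * (X₀ * X₀)) ^ (j + 1) = C * X₀ ^ (j + 2) := by
    intro j
    induction j with
    | zero =>
      rw [pow_one, show (2 : ℕ) = 1 + 1 from rfl, pow_succ, pow_one]
    | succ s ih =>
      rw [pow_succ _ (s + 1), ih, pow_succ X₀ (s + 2), pow_succ X₀ (s + 1)]
      simp only [Matrix.mul_assoc, hX2]
  -- expansion of AWGMP
  have hWexp : ∀ j, W * (AepW * W) ^ j = (W * AepW) ^ j * W := by
    intro j
    induction j with
    | zero => simp
    | succ s ih =>
      rw [pow_succ, pow_succ, ← Matrix.mul_assoc, ih]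
      simp only [Matrix.mul_assoc]
  have hWAep : W * AepW = C * (X₀ * X₀) := by
    rw [hAepW, ← Matrix.mul_assoc, hC]
  have hAWGMP2 : AWGMP = C * X₀ ^ (m + 2) * C ^ (m + 1) * Adag := by
    rw [hAWGMP, hAWGm]
    have e1 : W * ((AepW * W) ^ m * AepW * C ^ m) = C * X₀ ^ (m + 2) * C ^ m := by
      rw [← Matrix.mul_assoc, ← Matrix.mul_assoc, hWexp m, Matrix.mul_assoc _ W AepW,
        hWAep, ← pow_succ, hCXX m]
    rw [e1]
    have e2 : C * X₀ ^ (m + 2) * C ^ m * W * A = C * X₀ ^ (m + 2) * C ^ (m + 1) := by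
      rw [Matrix.mul_assoc _ W A, Matrix.mul_assoc _ (C ^ m), ← hC, ← pow_succ]
    rw [e2]
  set D := C ^ (m + 1) * Adag * B with hD
  have hgoalD : C ^ m * W * A * Adag * B = D := by
    rw [hD, Matrix.mul_assoc (C ^ m) W A, ← hC, ← pow_succ]
  -- the key identity : C^(m+1) * (AWGMP * B) = P * D
  have hmain : C ^ (m + 1) * (AWGMP * B) = P * D := by
    rw [hAWGMP2, hD]
    rw [show C * X₀ ^ (m + 2) * C ^ (m + 1) * Adag * B
        = C * (X₀ ^ (m + 2) * (C ^ (m + 1) * (Adag * B))) from by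
      simp only [Matrix.mul_assoc]]
    rw [show C ^ (m + 1) * (C * (X₀ ^ (m + 2) * (C ^ (m + 1) * (Adag * B))))
        = (C ^ (m + 2) * X₀ ^ (m + 2)) * (C ^ (m + 1) * (Adag * B)) from by
      rw [pow_succ C (m + 1)]; simp only [Matrix.mul_assoc]]
    rw [hCX (m + 1)]
    simp only [Matrix.mul_assoc]
  -- part 1
  have hpart1 : mrange (AWGMP * B) ≤ mrange (C ^ k) := by
    have hfac : AWGMP * B = P * (X₀ ^ (m + 1) * (C ^ (m + 1) * (Adag * B))) := by
      rw [hAWGMP2, hP, pow_succ' X₀ (m + 1)]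
      simp only [Matrix.mul_assoc]
    rw [hfac, hstab k hkd, ← hrP]
    exact mrange_mul_le _ _
  refine ⟨hpart1, ?_⟩
  intro X hXr hne
  rw [hgoalD, hmain]
  obtain ⟨Z, hZ⟩ := mfactor X (C ^ k) hXr
  -- P fixes C^(m+1) * X
  have hPY : P * (C ^ (m + 1) * X) = C ^ (m + 1) * X := by
    rw [hZ, show C ^ (m + 1) * (C ^ k * Z) = C ^ (m + 1 + k) * Z from by
        rw [← Matrix.mul_assoc, ← pow_add],
      ← Matrix.mul_assoc, hPpow (m + 1 + k) (le_trans hkd (Nat.le_add_left _ _))]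
  set U := C ^ (m + 1) * X - P * D with hU
  set V := P * D - D with hV
  have hUV : Uᴴ * V = 0 := by
    have hQ : (P * D)ᴴ = Dᴴ * P := by rw [Matrix.conjTranspose_mul, hPH]
    have hYP : (C ^ (m + 1) * X)ᴴ * P = (C ^ (m + 1) * X)ᴴ := by
      conv_lhs => rw [← hPH]
      rw [← Matrix.conjTranspose_mul, hPY]
    rw [hU, hV, Matrix.conjTranspose_sub, hQ, Matrix.sub_mul, Matrix.mul_sub, Matrix.mul_sub]
    rw [← Matrix.mul_assoc _ P D, hYP, Matrix.mul_assoc Dᴴ P (P * D),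
      ← Matrix.mul_assoc P P D, hPP, ← Matrix.mul_assoc Dᴴ P D, sub_self, sub_self, sub_zero]
  have hsum : C ^ (m + 1) * X - D = U + V := by
    rw [hU, hV, sub_add_sub_cancel]
  have hVform : C ^ (m + 1) * X - D = U + V := hsum
  -- U ≠ 0
  have hUne : U ≠ 0 := by
    intro h0
    apply hne
    have hEq : C ^ (m + 1) * X = C ^ (m + 1) * (AWGMP * B) := by
      rw [hmain]
      exact sub_eq_zero.mp h0
    -- injectivity columnwise
    have hcols : ∀ j, X *ᵥ Pi.single j 1 = (AWGMP * B) *ᵥ Pi.single j 1 := by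
      intro j
      have hw1 : X *ᵥ Pi.single j 1 ∈ mrange (C ^ k) := hXr ⟨Pi.single j 1, rfl⟩
      have hw2 : (AWGMP * B) *ᵥ Pi.single j 1 ∈ mrange (C ^ k) := hpart1 ⟨Pi.single j 1, rfl⟩
      have hmem : X *ᵥ Pi.single j 1 - (AWGMP * B) *ᵥ Pi.single j 1 ∈ mrange (C ^ k) :=
        Submodule.sub_mem _ hw1 hw2
      have h00 : (C ^ (m + 1)) *ᵥ (X *ᵥ Pi.single j 1 - (AWGMP * B) *ᵥ Pi.single j 1) = 0 := by
        rw [Matrix.mulVec_sub, Matrix.mulVec_mulVec, Matrix.mulVec_mulVec, hEq, sub_self]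
      have := pow_inj_on_range C k (m + 1) hkd _ hmem h00
      exact sub_eq_zero.mp this
    ext i j
    have := congrFun (hcols j) i
    simpa [Matrix.mulVec_single_one] using this
  -- positivity of the U part
  have hUpos : 0 < ∑ i, ∑ j, ‖U i j‖ ^ 2 := by
    obtain ⟨i0, j0, hij⟩ : ∃ i j, U i j ≠ 0 := by
      by_contra hcon
      push_neg at hcon
      exact hUne (by ext i j; exact hcon i j)
    have hterm : (0 : ℝ) < ‖U i0 j0‖ ^ 2 := pow_pos (norm_pos_iff.mpr hij) 2
    refine Finset.sum_pos' (fun i _ => Finset.sum_nonneg fun j _ => by positivity) ⟨i0, Finset.mem_univ _, ?_⟩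
    exact Finset.sum_pos' (fun j _ => by positivity) ⟨j0, Finset.mem_univ _, hterm⟩
  have hVnonneg : (0 : ℝ) ≤ ∑ i, ∑ j, ‖V i j‖ ^ 2 :=
    Finset.sum_nonneg fun i _ => Finset.sum_nonneg fun j _ => by positivity
  rw [frobNorm, frobNorm, hVform, frob_sq_add U V hUV]
  exact Real.sqrt_lt_sqrt hVnonneg (by linarith)
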